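/- arXiv:2307.04303 — 4 statements merged into one kernel-verified Lean document; each statement's English description precedes it below -/
import Mathlib

section
/- Let (Ω, P) be a probability space with a balanced binary attribute A (Pr(A=0)=Pr(A=1)=1/2) and [0,1]-valued random variables D-score S_D := s(D,A) and D̂-score S_D̂ := s(D̂,A), where the goal distribution satisfies score parity: E[S_D | A=0] = E[S_D | A=1]. Then the parity gap of the learned distribution Δ := |E[s(D̂,0) | A=0] - E[s(D̂,1) | A=1]| satisfies Δ ≤ 2·E[|s(D,A) - s(D̂,A)|]. -/
open MeasureTheory ProbabilityTheory

/-- Theorem 1 of the paper (score parity reduction): if the goal dialogue `D` satisfies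
score parity under a balanced binary attribute `A`, then the parity gap of the learned
dialogue `D̂` is at most twice the test divergence `E[|s(D,A) - s(D̂,A)|]`. -/
theorem parity_gap_le_two_mul_testDivergence
    {Ω 𝒟 : Type*} [MeasurableSpace Ω] (μ : Measure Ω) [IsProbabilityMeasure μ]
    (A : Ω → Bool) (D Dhat : Ω → 𝒟) (s : 𝒟 → Bool → ℝ)
    (hA : Measurable A)
    (hmeasD : ∀ a, Measurable fun ω => s (D ω) a)
    (hmeasDhat : ∀ a, Measurable fun ω => s (Dhat ω) a)
    (hmeasDA : Measurable fun ω => s (D ω) (A ω))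
    (hmeasDhatA : Measurable fun ω => s (Dhat ω) (A ω))
    (hs01 : ∀ d a, s d a ∈ Set.Icc (0 : ℝ) 1)
    (hbal0 : μ (A ⁻¹' {false}) = 1 / 2) (hbal1 : μ (A ⁻¹' {true}) = 1 / 2)
    (hparity : ∫ ω, s (D ω) false ∂μ[|A ⁻¹' {false}]
      = ∫ ω, s (D ω) true ∂μ[|A ⁻¹' {true}]) :
    |(∫ ω, s (Dhat ω) false ∂μ[|A ⁻¹' {false}])
        - ∫ ω, s (Dhat ω) true ∂μ[|A ⁻¹' {true}]|
      ≤ 2 * ∫ ω, |s (D ω) (A ω) - s (Dhat ω) (A ω)| ∂μ := by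
  have hT0 : MeasurableSet (A ⁻¹' {false}) := hA (measurableSet_singleton _)
  have hT1 : MeasurableSet (A ⁻¹' {true}) := hA (measurableSet_singleton _)
  have hc : A ⁻¹' {true} = (A ⁻¹' {false})ᶜ := by
    ext ω; cases h : A ω <;> simp [h]
  -- conditional integral as 2 * set integral
  have hcond : ∀ (T : Set Ω) (f : Ω → ℝ), μ T = 1/2 →
      ∫ ω, f ω ∂μ[|T] = 2 * ∫ ω in T, f ω ∂μ := by
    intro T f hT
    rw [ProbabilityTheory.cond, integral_smul_measure, hT]
    norm_num
  -- integrability helper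
  have hint : ∀ (f : Ω → ℝ), Measurable f → (∀ ω, |f ω| ≤ 1) → Integrable f μ := by
    intro f hf hb
    exact (integrable_const (1:ℝ)).mono' hf.aestronglyMeasurable (Filter.Eventually.of_forall hb)
  have hb1 : ∀ d a, |s d a| ≤ 1 := by
    intro d a
    have := hs01 d a
    rw [abs_le]; constructor <;> [linarith [this.1]; exact this.2]
  have hintD : ∀ a, Integrable (fun ω => s (D ω) a) μ :=
    fun a => hint _ (hmeasD a) (fun ω => hb1 _ _)
  have hintDhat : ∀ a, Integrable (fun ω => s (Dhat ω) a) μ :=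
    fun a => hint _ (hmeasDhat a) (fun ω => hb1 _ _)
  have hintdiff : ∀ a, Integrable (fun ω => s (D ω) a - s (Dhat ω) a) μ :=
    fun a => (hintD a).sub (hintDhat a)
  have hintabsA : Integrable (fun ω => |s (D ω) (A ω) - s (Dhat ω) (A ω)|) μ := by
    refine hint _ (hmeasDA.sub hmeasDhatA).abs ?_
    intro ω
    rw [abs_abs, abs_sub_le_iff]
    have h1 := hs01 (D ω) (A ω); have h2 := hs01 (Dhat ω) (A ω)
    constructor <;> [linarith [h1.2, h2.1]; linarith [h1.1, h2.2]]
  -- rewrite conditional integrals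
  rw [hcond _ _ hbal0, hcond _ _ hbal1]
  rw [hcond _ _ hbal0, hcond _ _ hbal1] at hparity
  set b0 := ∫ ω in A ⁻¹' {false}, s (D ω) false ∂μ with hb0
  set b1 := ∫ ω in A ⁻¹' {true}, s (D ω) true ∂μ with hb1'
  set a0 := ∫ ω in A ⁻¹' {false}, s (Dhat ω) false ∂μ with ha0
  set a1 := ∫ ω in A ⁻¹' {true}, s (Dhat ω) true ∂μ with ha1
  have hbeq : b0 = b1 := by linarith
  -- set integral of absolute diff on each piece
  have hset : ∀ (a : Bool), ∫ ω in A ⁻¹' {a}, |s (D ω) a - s (Dhat ω) a| ∂μ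
      = ∫ ω in A ⁻¹' {a}, |s (D ω) (A ω) - s (Dhat ω) (A ω)| ∂μ := by
    intro a
    refine setIntegral_congr_fun (hA (measurableSet_singleton _)) ?_
    intro ω hω
    have : A ω = a := hω
    simp [this]
  have key0 : |b0 - a0| ≤ ∫ ω in A ⁻¹' {false}, |s (D ω) (A ω) - s (Dhat ω) (A ω)| ∂μ := by
    rw [← hset false, hb0, ha0, ← integral_sub ((hintD false).restrict) ((hintDhat false).restrict)]
    simpa [Real.norm_eq_abs] using norm_integral_le_integral_norm (μ := μ.restrict (A ⁻¹' {false})) (f := fun ω => s (D ω) false - s (Dhat ω) false)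
  have key1 : |b1 - a1| ≤ ∫ ω in A ⁻¹' {true}, |s (D ω) (A ω) - s (Dhat ω) (A ω)| ∂μ := by
    rw [← hset true, hb1', ha1, ← integral_sub ((hintD true).restrict) ((hintDhat true).restrict)]
    simpa [Real.norm_eq_abs] using norm_integral_le_integral_norm (μ := μ.restrict (A ⁻¹' {true})) (f := fun ω => s (D ω) true - s (Dhat ω) true)
  have hsum : (∫ ω in A ⁻¹' {false}, |s (D ω) (A ω) - s (Dhat ω) (A ω)| ∂μ)
      + (∫ ω in A ⁻¹' {true}, |s (D ω) (A ω) - s (Dhat ω) (A ω)| ∂μ)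
      = ∫ ω, |s (D ω) (A ω) - s (Dhat ω) (A ω)| ∂μ := by
    rw [hc]
    exact integral_add_compl hT0 hintabsA
  calc |2 * a0 - 2 * a1| = |2 * (a0 - b0) + 2 * (b1 - a1)| := by rw [hbeq]; ring_nf
    _ ≤ |2 * (a0 - b0)| + |2 * (b1 - a1)| := abs_add_le _ _
    _ = 2 * |b0 - a0| + 2 * |b1 - a1| := by rw [abs_mul, abs_mul, abs_sub_comm a0 b0]; norm_num
    _ ≤ 2 * (∫ ω in A ⁻¹' {false}, |s (D ω) (A ω) - s (Dhat ω) (A ω)| ∂μ)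
        + 2 * (∫ ω in A ⁻¹' {true}, |s (D ω) (A ω) - s (Dhat ω) (A ω)| ∂μ) := by
      have := key0; have := key1; linarith
    _ = 2 * ∫ ω, |s (D ω) (A ω) - s (Dhat ω) (A ω)| ∂μ := by rw [← hsum]; ring
end

section
/- Let (C, D, A) and (C̃, D̃, Ã) be triples of random variables with C, C̃ valued in a finite set 𝒞, D, D̃ in a finite set 𝒟, and A, Ã binary. Suppose: (i) Pr(D=d | C=c) = Pr(D̃=d | C̃=c) for all c, d (context-awareness); (ii) Pr(C=c | A=a) = Pr(C̃=c | Ã=a) for all c, a (context-preservation); (iii) Pr(A=0)=Pr(A=1)=1/2; (iv) β := min_a Pr(Ã=a) > 0; (v) in each triple, the dialogue, a predicted dialogue D̂ (resp. D̂′) sampled from the same kernel P_θ(·) applied to the context, and the attribute are pairwise conditionally independent given the context, with Pr(D̂=d̂ | C=c) = Pr(D̂′=d̂ | C̃=c) and Pr(A=a | C=c) = Pr(Ã=a | C̃=c). Then for any function h : 𝒟×{0,1} → [0,1], E[|h(D,A) - h(D̂,A)|] ≤ (1/(2β)) · E[|h(D̃,Ã) - h(D̂′,Ã)|]. -/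
open scoped Classical in
/-- Probability of an event under a discrete distribution `p` on a finite sample space. -/
noncomputable def pr {Ω : Type*} [Fintype Ω] (p : Ω → ℝ) (E : Ω → Prop) : ℝ :=
  ∑ ω, if E ω then p ω else 0

/-- Conditional probability `Pr(E | F)` under a discrete distribution `p`. -/
noncomputable def cpr {Ω : Type*} [Fintype Ω] (p : Ω → ℝ) (E F : Ω → Prop) : ℝ :=
  pr p (fun ω => E ω ∧ F ω) / pr p F


section aux
variable {Ω : Type*} [Fintype Ω] {p : Ω → ℝ}

lemma pr_nonneg (hp : ∀ ω, 0 ≤ p ω) (E : Ω → Prop) : 0 ≤ pr p E := by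
  classical
  refine Finset.sum_nonneg fun ω _ => ?_
  split_ifs <;> simp [hp ω]

lemma pr_congr {E F : Ω → Prop} (h : ∀ ω, E ω ↔ F ω) : pr p E = pr p F := by
  classical
  refine Finset.sum_congr rfl fun ω _ => ?_
  exact if_congr (h ω) rfl rfl

lemma pr_and_le (hp : ∀ ω, 0 ≤ p ω) (E F : Ω → Prop) :
    pr p (fun ω => E ω ∧ F ω) ≤ pr p F := by
  classical
  refine Finset.sum_le_sum fun ω _ => ?_
  by_cases hF : F ω <;> by_cases hE : E ω <;> simp [hE, hF, hp ω]

lemma cpr_nonneg (hp : ∀ ω, 0 ≤ p ω) (E F : Ω → Prop) : 0 ≤ cpr p E F :=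
  div_nonneg (pr_nonneg hp _) (pr_nonneg hp _)

lemma pr_and_eq (hp : ∀ ω, 0 ≤ p ω) (E F : Ω → Prop) :
    pr p (fun ω => E ω ∧ F ω) = cpr p E F * pr p F := by
  by_cases hF : pr p F = 0
  · have h1 : pr p (fun ω => E ω ∧ F ω) = 0 :=
      le_antisymm (hF ▸ pr_and_le hp E F) (pr_nonneg hp _)
    simp [cpr, hF, h1]
  · rw [cpr, div_mul_cancel₀ _ hF]

lemma expand4 {α1 α2 α3 α4 : Type*} [Fintype α1] [Fintype α2] [Fintype α3] [Fintype α4]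
    (p : Ω → ℝ) (X1 : Ω → α1) (X2 : Ω → α2) (X3 : Ω → α3) (X4 : Ω → α4)
    (g : α1 → α2 → α3 → α4 → ℝ) :
    ∑ ω, p ω * g (X1 ω) (X2 ω) (X3 ω) (X4 ω)
      = ∑ c, ∑ d, ∑ dh, ∑ a,
          pr p (fun ω => X1 ω = c ∧ X2 ω = d ∧ X3 ω = dh ∧ X4 ω = a) * g c d dh a := by
  classical
  have step : ∀ ω, p ω * g (X1 ω) (X2 ω) (X3 ω) (X4 ω)
      = ∑ c, ∑ d, ∑ dh, ∑ a,
          (if X1 ω = c ∧ X2 ω = d ∧ X3 ω = dh ∧ X4 ω = a then p ω * g c d dh a else 0) := by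
    intro ω
    simp [ite_and, Finset.sum_ite_eq]
  rw [Finset.sum_congr rfl fun ω _ => step ω]
  rw [Finset.sum_comm]
  refine Finset.sum_congr rfl fun c _ => ?_
  rw [Finset.sum_comm]
  refine Finset.sum_congr rfl fun d _ => ?_
  rw [Finset.sum_comm]
  refine Finset.sum_congr rfl fun dh _ => ?_
  rw [Finset.sum_comm]
  refine Finset.sum_congr rfl fun a _ => ?_
  rw [pr, Finset.sum_mul]
  refine Finset.sum_congr rfl fun ω _ => ?_
  split_ifs <;> simp

end aux

/-- Population-level core of Theorem 2: under context-awareness, context-preservation,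
balance of the goal, matching prediction/attribute kernels, and (pairwise) conditional
independence given the context in both distributions, the test divergence on the
equitable goal distribution is bounded by `1/(2β)` times the test divergence on the
(possibly biased) human distribution, where `β = min_a Pr(Ã=a) > 0`. -/
theorem goal_testDivergence_le_human_testDivergence
    {Ω₁ Ω₂ 𝒞 𝒟 : Type*} [Fintype Ω₁] [Fintype Ω₂] [Fintype 𝒞] [Fintype 𝒟]
    (p : Ω₁ → ℝ) (hp0 : ∀ ω, 0 ≤ p ω) (hp1 : ∑ ω, p ω = 1)
    (q : Ω₂ → ℝ) (hq0 : ∀ ω, 0 ≤ q ω) (hq1 : ∑ ω, q ω = 1)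
    (C : Ω₁ → 𝒞) (D Dhat : Ω₁ → 𝒟) (A : Ω₁ → Bool)
    (Ct : Ω₂ → 𝒞) (Dt Dhat' : Ω₂ → 𝒟) (At : Ω₂ → Bool)
    (h : 𝒟 → Bool → ℝ) (h01 : ∀ d a, h d a ∈ Set.Icc (0 : ℝ) 1)
    -- (i) context-awareness
    (haware : ∀ (c : 𝒞) (d : 𝒟),
      cpr p (fun ω => D ω = d) (fun ω => C ω = c)
        = cpr q (fun ω => Dt ω = d) (fun ω => Ct ω = c))
    -- (ii) context-preservation
    (hpres : ∀ (c : 𝒞) (a : Bool),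
      cpr p (fun ω => C ω = c) (fun ω => A ω = a)
        = cpr q (fun ω => Ct ω = c) (fun ω => At ω = a))
    -- (iii) balance of the goal
    (hbal0 : pr p (fun ω => A ω = false) = 1 / 2)
    (hbal1 : pr p (fun ω => A ω = true) = 1 / 2)
    -- (iv) positivity of β
    (hβ : 0 < min (pr q (fun ω => At ω = false)) (pr q (fun ω => At ω = true)))
    -- (v) same prediction kernel and same attribute kernel
    (hkernel : ∀ (c : 𝒞) (dh : 𝒟),
      cpr p (fun ω => Dhat ω = dh) (fun ω => C ω = c)
        = cpr q (fun ω => Dhat' ω = dh) (fun ω => Ct ω = c))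
    (hattr : ∀ (c : 𝒞) (a : Bool),
      cpr p (fun ω => A ω = a) (fun ω => C ω = c)
        = cpr q (fun ω => At ω = a) (fun ω => Ct ω = c))
    -- (v) pairwise conditional independence given the context, in both distributions
    (hindep₁ : ∀ (c : 𝒞) (d dh : 𝒟) (a : Bool), 0 < pr p (fun ω => C ω = c) →
      cpr p (fun ω => D ω = d ∧ Dhat ω = dh ∧ A ω = a) (fun ω => C ω = c)
        = cpr p (fun ω => D ω = d) (fun ω => C ω = c)
          * cpr p (fun ω => Dhat ω = dh) (fun ω => C ω = c)
          * cpr p (fun ω => A ω = a) (fun ω => C ω = c))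
    (hindep₂ : ∀ (c : 𝒞) (d dh : 𝒟) (a : Bool), 0 < pr q (fun ω => Ct ω = c) →
      cpr q (fun ω => Dt ω = d ∧ Dhat' ω = dh ∧ At ω = a) (fun ω => Ct ω = c)
        = cpr q (fun ω => Dt ω = d) (fun ω => Ct ω = c)
          * cpr q (fun ω => Dhat' ω = dh) (fun ω => Ct ω = c)
          * cpr q (fun ω => At ω = a) (fun ω => Ct ω = c)) :
    ∑ ω, p ω * |h (D ω) (A ω) - h (Dhat ω) (A ω)|
      ≤ (1 / (2 * min (pr q (fun ω => At ω = false)) (pr q (fun ω => At ω = true))))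
          * ∑ ω, q ω * |h (Dt ω) (At ω) - h (Dhat' ω) (At ω)| := by
  set m := min (pr q (fun ω => At ω = false)) (pr q (fun ω => At ω = true)) with hm
  have hm0 : 0 < m := hβ
  have hma : ∀ a : Bool, m ≤ pr q (fun ω => At ω = a) := by
    intro a; cases a
    · exact min_le_left _ _
    · exact min_le_right _ _
  -- weight comparison
  have hweight : ∀ (c : 𝒞) (a : Bool),
      pr p (fun ω => A ω = a ∧ C ω = c)
        ≤ (1 / (2 * m)) * pr q (fun ω => At ω = a ∧ Ct ω = c) := by
    intro c a
    have e1 : pr p (fun ω => A ω = a ∧ C ω = c)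
        = pr p (fun ω => C ω = c ∧ A ω = a) := pr_congr (fun ω => by tauto)
    have e2 : pr q (fun ω => At ω = a ∧ Ct ω = c)
        = pr q (fun ω => Ct ω = c ∧ At ω = a) := pr_congr (fun ω => by tauto)
    rw [e1, e2, pr_and_eq hp0, pr_and_eq hq0, hpres]
    have hpa : pr p (fun ω => A ω = a) = 1 / 2 := by
      cases a
      · exact hbal0
      · exact hbal1
    rw [hpa]
    have hx0 : 0 ≤ cpr q (fun ω => Ct ω = c) (fun ω => At ω = a) := cpr_nonneg hq0 _ _
    have key : cpr q (fun ω => Ct ω = c) (fun ω => At ω = a) * (1 / 2)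
        = 1 / (2 * m) * (cpr q (fun ω => Ct ω = c) (fun ω => At ω = a) * m) := by
      field_simp
    rw [key]
    have : cpr q (fun ω => Ct ω = c) (fun ω => At ω = a) * m
        ≤ cpr q (fun ω => Ct ω = c) (fun ω => At ω = a) * pr q (fun ω => At ω = a) :=
      mul_le_mul_of_nonneg_left (hma a) hx0
    exact mul_le_mul_of_nonneg_left this (by positivity)
  -- term rewrites
  have hterm₁ : ∀ (c : 𝒞) (d dh : 𝒟) (a : Bool),
      pr p (fun ω => C ω = c ∧ D ω = d ∧ Dhat ω = dh ∧ A ω = a)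
        = cpr p (fun ω => D ω = d) (fun ω => C ω = c)
          * cpr p (fun ω => Dhat ω = dh) (fun ω => C ω = c)
          * pr p (fun ω => A ω = a ∧ C ω = c) := by
    intro c d dh a
    have e : pr p (fun ω => C ω = c ∧ D ω = d ∧ Dhat ω = dh ∧ A ω = a)
        = pr p (fun ω => (D ω = d ∧ Dhat ω = dh ∧ A ω = a) ∧ C ω = c) :=
      pr_congr (fun ω => by tauto)
    rw [e, pr_and_eq hp0, pr_and_eq hp0 (fun ω => A ω = a) (fun ω => C ω = c)]
    rcases (pr_nonneg hp0 (fun ω => C ω = c)).lt_or_eq with hpos | hzero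
    · rw [hindep₁ c d dh a hpos]; ring
    · rw [← hzero]; ring
  have hterm₂ : ∀ (c : 𝒞) (d dh : 𝒟) (a : Bool),
      pr q (fun ω => Ct ω = c ∧ Dt ω = d ∧ Dhat' ω = dh ∧ At ω = a)
        = cpr p (fun ω => D ω = d) (fun ω => C ω = c)
          * cpr p (fun ω => Dhat ω = dh) (fun ω => C ω = c)
          * pr q (fun ω => At ω = a ∧ Ct ω = c) := by
    intro c d dh a
    have e : pr q (fun ω => Ct ω = c ∧ Dt ω = d ∧ Dhat' ω = dh ∧ At ω = a)
        = pr q (fun ω => (Dt ω = d ∧ Dhat' ω = dh ∧ At ω = a) ∧ Ct ω = c) :=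
      pr_congr (fun ω => by tauto)
    rw [e, pr_and_eq hq0, pr_and_eq hq0 (fun ω => At ω = a) (fun ω => Ct ω = c),
      haware c d, hkernel c dh]
    rcases (pr_nonneg hq0 (fun ω => Ct ω = c)).lt_or_eq with hpos | hzero
    · rw [hindep₂ c d dh a hpos]; ring
    · rw [← hzero]; ring
  have e₁ : (∑ ω, p ω * |h (D ω) (A ω) - h (Dhat ω) (A ω)|)
      = ∑ c : 𝒞, ∑ d : 𝒟, ∑ dh : 𝒟, ∑ a : Bool,
          pr p (fun ω => C ω = c ∧ D ω = d ∧ Dhat ω = dh ∧ A ω = a)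
            * |h d a - h dh a| :=
    expand4 p C D Dhat A fun _ d dh a => |h d a - h dh a|
  have e₂ : (∑ ω, q ω * |h (Dt ω) (At ω) - h (Dhat' ω) (At ω)|)
      = ∑ c : 𝒞, ∑ d : 𝒟, ∑ dh : 𝒟, ∑ a : Bool,
          pr q (fun ω => Ct ω = c ∧ Dt ω = d ∧ Dhat' ω = dh ∧ At ω = a)
            * |h d a - h dh a| :=
    expand4 q Ct Dt Dhat' At fun _ d dh a => |h d a - h dh a|
  rw [e₁, e₂]
  simp only [Finset.mul_sum]
  refine Finset.sum_le_sum fun c _ => ?_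
  refine Finset.sum_le_sum fun d _ => ?_
  refine Finset.sum_le_sum fun dh _ => ?_
  refine Finset.sum_le_sum fun a _ => ?_
  rw [hterm₁ c d dh a, hterm₂ c d dh a]
  have hK : 0 ≤ cpr p (fun ω => D ω = d) (fun ω => C ω = c)
      * cpr p (fun ω => Dhat ω = dh) (fun ω => C ω = c) * |h d a - h dh a| := by
    have := cpr_nonneg hp0 (fun ω => D ω = d) (fun ω => C ω = c)
    have := cpr_nonneg hp0 (fun ω => Dhat ω = dh) (fun ω => C ω = c)
    positivity
  calc cpr p (fun ω => D ω = d) (fun ω => C ω = c)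
        * cpr p (fun ω => Dhat ω = dh) (fun ω => C ω = c)
        * pr p (fun ω => A ω = a ∧ C ω = c) * |h d a - h dh a|
      = (cpr p (fun ω => D ω = d) (fun ω => C ω = c)
          * cpr p (fun ω => Dhat ω = dh) (fun ω => C ω = c) * |h d a - h dh a|)
          * pr p (fun ω => A ω = a ∧ C ω = c) := by ring
    _ ≤ (cpr p (fun ω => D ω = d) (fun ω => C ω = c)
          * cpr p (fun ω => Dhat ω = dh) (fun ω => C ω = c) * |h d a - h dh a|)
          * ((1 / (2 * m)) * pr q (fun ω => At ω = a ∧ Ct ω = c)) :=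
        mul_le_mul_of_nonneg_left (hweight c a) hK
    _ = 1 / (2 * m) * (cpr p (fun ω => D ω = d) (fun ω => C ω = c)
          * cpr p (fun ω => Dhat ω = dh) (fun ω => C ω = c)
          * pr q (fun ω => At ω = a ∧ Ct ω = c) * |h d a - h dh a|) := by ring
end

section
/- Let 0 < δ < 1 and m ≥ 1, and let Θ be a finite nonempty set. Under the hypotheses of the population bound (context-awareness, context-preservation, balance, pairwise conditional independence, β := min_a Pr(Ã=a) > 0) and given an i.i.d. sample (C̃_i, D̃_i)_{i=1}^m from the human distribution with attributes Ã_i and predictions D̂′_i ~ P_θ(C̃_i), with probability at least 1 - δ, for all θ ∈ Θ: 2β · E[|h(D,A) - h(D̂,A)|] ≤ (1/m) Σ_{i=1}^m |h(D̃_i, Ã_i) - h(D̂′_i, Ã_i)| + sqrt((log|Θ| + log(2/δ)) / (2m)). -/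
/-
Context-awareness, context-preservation and balance force the goal weight `g c d * Ak c a`
to equal `q c d * Ak c a / (2 Pr(Ã = a))` wherever it is nonzero, so `2β` times the test
divergence under the goal distribution is at most the one under the human distribution.
The latter is the common mean of the i.i.d. `[0,1]`-valued sample losses `|h(D̃ᵢ,Ãᵢ) - h(D̂′ᵢ,Ãᵢ)|`;
Hoeffding's inequality and a union bound over `Θ` at confidence `δ/2` bound it uniformly by the
empirical mean plus `√((log |Θ| + log (2/δ)) / (2m))`.
-/

open MeasureTheory ProbabilityTheory

section ChangeOfMeasure

variable {𝒞 𝒟 α : Type*} [Fintype 𝒞] [Fintype 𝒟] {g q : 𝒞 → 𝒟 → ℝ} {Ak : 𝒞 → α → ℝ} {β : ℝ}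

lemma two_mul_goal_weight_le_human_weight (hg0 : ∀ c d, 0 ≤ g c d) (hq0 : ∀ c d, 0 ≤ q c d)
    (hAk0 : ∀ c a, 0 ≤ Ak c a)
    (haware : ∀ c d, g c d / (∑ d', g c d') = q c d / (∑ d', q c d'))
    (hpres : ∀ c a,
      ((∑ d', g c d') * Ak c a) / (∑ c', (∑ d', g c' d') * Ak c' a)
        = ((∑ d', q c d') * Ak c a) / (∑ c', (∑ d', q c' d') * Ak c' a))
    (hbal : ∀ a, ∑ c, (∑ d', g c d') * Ak c a = 1 / 2)
    (hβ : ∀ a, β ≤ ∑ c, (∑ d, q c d) * Ak c a) (c : 𝒞) (d : 𝒟) (a : α) :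
    2 * β * (g c d * Ak c a) ≤ q c d * Ak c a := by
  have hp := hpres c a
  rw [hbal a] at hp
  have haw := haware c d
  set G := ∑ d', g c d'
  set Q := ∑ d', q c d'
  set H := ∑ c', (∑ d', q c' d') * Ak c' a
  rcases (mul_nonneg (hg0 c d) (hAk0 c a)).eq_or_lt with hzero | hpos
  · rw [← hzero, mul_zero]
    exact mul_nonneg (hq0 c d) (hAk0 c a)
  have hgpos : 0 < g c d := pos_of_mul_pos_left hpos (hAk0 c a)
  have hApos : 0 < Ak c a := pos_of_mul_pos_right hpos (hg0 c d)
  have hG : 0 < G :=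
    hgpos.trans_le (Finset.single_le_sum (fun d' _ ↦ hg0 c d') (Finset.mem_univ d))
  have hH : H ≠ 0 := by
    intro h0
    rw [h0, div_zero] at hp
    have : 0 < G * Ak c a / (1 / 2) := by positivity
    linarith
  -- the attribute weight `Ak c a > 0` cancels from context-preservation
  have hQ_eq : Q = 2 * G * H := by
    field_simp at hp
    linarith
  have hQ : Q ≠ 0 := by
    rw [hQ_eq]
    exact mul_ne_zero (mul_ne_zero two_ne_zero hG.ne') hH
  have hgq : g c d * Q = q c d * G := (div_eq_div_iff hG.ne' hQ).1 haw
  calc 2 * β * (g c d * Ak c a) ≤ 2 * H * (g c d * Ak c a) := by gcongr; exact hβ a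
    _ = q c d * Ak c a := by
      apply mul_right_cancel₀ hG.ne'
      linear_combination Ak c a * hgq - Ak c a * g c d * hQ_eq

lemma two_mul_goal_expectation_le_human_expectation [Fintype α] (hg0 : ∀ c d, 0 ≤ g c d)
    (hq0 : ∀ c d, 0 ≤ q c d) (hAk0 : ∀ c a, 0 ≤ Ak c a)
    (haware : ∀ c d, g c d / (∑ d', g c d') = q c d / (∑ d', q c d'))
    (hpres : ∀ c a,
      ((∑ d', g c d') * Ak c a) / (∑ c', (∑ d', g c' d') * Ak c' a)
        = ((∑ d', q c d') * Ak c a) / (∑ c', (∑ d', q c' d') * Ak c' a))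
    (hbal : ∀ a, ∑ c, (∑ d', g c d') * Ak c a = 1 / 2)
    (hβ : ∀ a, β ≤ ∑ c, (∑ d, q c d) * Ak c a) {P : 𝒞 → 𝒟 → ℝ} (hP0 : ∀ c d, 0 ≤ P c d)
    {φ : 𝒟 → 𝒟 → α → ℝ} (hφ0 : ∀ d d' a, 0 ≤ φ d d' a) :
    2 * β * (∑ c, ∑ d, ∑ d', ∑ a, g c d * P c d' * Ak c a * φ d d' a)
      ≤ ∑ c, ∑ d, ∑ d', ∑ a, q c d * P c d' * Ak c a * φ d d' a := by
  simp only [Finset.mul_sum]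
  refine Finset.sum_le_sum fun c _ ↦ Finset.sum_le_sum fun d _ ↦
    Finset.sum_le_sum fun d' _ ↦ Finset.sum_le_sum fun a _ ↦ ?_
  calc 2 * β * (g c d * P c d' * Ak c a * φ d d' a)
      = 2 * β * (g c d * Ak c a) * (P c d' * φ d d' a) := by ring
    _ ≤ q c d * Ak c a * (P c d' * φ d d' a) :=
      mul_le_mul_of_nonneg_right
        (two_mul_goal_weight_le_human_weight hg0 hq0 hAk0 haware hpres hbal hβ c d a)
        (mul_nonneg (hP0 c d') (hφ0 d d' a))
    _ = q c d * P c d' * Ak c a * φ d d' a := by ring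

end ChangeOfMeasure

lemma integral_comp_eq_sum_measureReal {Ω α : Type*} [MeasurableSpace Ω] {μ : Measure Ω}
    [IsFiniteMeasure μ] [Fintype α] [MeasurableSpace α] [MeasurableSingletonClass α]
    {X : Ω → α} (hX : Measurable X) (f : α → ℝ) :
    ∫ ω, f (X ω) ∂μ = ∑ x, μ.real {ω | X ω = x} * f x := by
  rw [← integral_map hX.aemeasurable (measurable_of_countable f).aestronglyMeasurable,
    integral_fintype .of_finite]
  refine Finset.sum_congr rfl fun x _ ↦ ?_
  rw [smul_eq_mul, measureReal_def, Measure.map_apply hX (measurableSet_singleton x)]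
  rfl

section Hoeffding

variable {Ω : Type*} [MeasurableSpace Ω] {μ : Measure Ω} [IsProbabilityMeasure μ]

lemma measureReal_mean_add_le_le_exp {ι : Type*} [Fintype ι] [Nonempty ι] {Y : ι → Ω → ℝ}
    {p t : ℝ} (hind : iIndepFun Y μ) (hmeas : ∀ i, Measurable (Y i))
    (hY : ∀ i ω, Y i ω ∈ Set.Icc 0 1) (hmean : ∀ i, μ[Y i] = p) (ht : 0 ≤ t) :
    μ.real {ω | 1 / (Fintype.card ι : ℝ) * ∑ i, Y i ω + t ≤ p}
      ≤ Real.exp (-2 * Fintype.card ι * t ^ 2) := by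
  set n : ℝ := (Fintype.card ι : ℝ)
  have hn : 0 < n := by positivity
  have hsubG : ∀ i ∈ Finset.univ, HasSubgaussianMGF (fun ω ↦ p - Y i ω) (1 / 4) μ := by
    intro i _
    have := (hasSubgaussianMGF_of_mem_Icc (μ := μ) (hmeas i).aemeasurable (ae_of_all _ (hY i))).neg
    convert this.congr (ae_of_all _ fun ω ↦ ?_) using 1
    · ext; norm_num
    · simp [hmean i]
  have hindZ : iIndepFun (fun i ω ↦ p - Y i ω) μ :=
    hind.comp (fun _ x ↦ p - x) fun _ ↦ measurable_const.sub measurable_id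
  calc μ.real {ω | 1 / n * ∑ i, Y i ω + t ≤ p}
      ≤ μ.real {ω | n * t ≤ ∑ i, (p - Y i ω)} := by
        refine measureReal_mono fun ω hω ↦ ?_
        simp only [Set.mem_ofPred_eq, Finset.sum_sub_distrib, Finset.sum_const,
          Finset.card_univ, nsmul_eq_mul] at hω ⊢
        rw [div_mul_eq_mul_div, one_mul, div_add' _ _ _ hn.ne', div_le_iff₀ hn] at hω
        linarith
    _ ≤ Real.exp (-(n * t) ^ 2 / (2 * ∑ _i : ι, (1 / 4 : NNReal))) :=
        HasSubgaussianMGF.measure_sum_ge_le_of_iIndepFun hindZ hsubG (by positivity)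
    _ = Real.exp (-2 * n * t ^ 2) := by
        congr 1
        simp only [Finset.sum_const, Finset.card_univ, nsmul_eq_mul]
        push_cast
        field_simp
        ring

lemma ofReal_one_sub_le_measure_forall_le_mean_add_sqrt {Θ ι : Type*} [Fintype Θ] [Nonempty Θ]
    [Fintype ι] [Nonempty ι] {Y : Θ → ι → Ω → ℝ} {p : Θ → ℝ} {δ : ℝ} (hδ0 : 0 < δ)
    (hδ1 : δ ≤ 1) (hind : ∀ θ, iIndepFun (Y θ) μ) (hmeas : ∀ θ i, Measurable (Y θ i))
    (hY : ∀ θ i ω, Y θ i ω ∈ Set.Icc 0 1) (hmean : ∀ θ i, μ[Y θ i] = p θ) :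
    ENNReal.ofReal (1 - δ) ≤ μ {ω | ∀ θ, p θ ≤ 1 / (Fintype.card ι : ℝ) * ∑ i, Y θ i ω
      + √((Real.log (Fintype.card Θ) + Real.log (1 / δ)) / (2 * Fintype.card ι))} := by
  set K : ℝ := (Fintype.card Θ : ℝ) with hK_def
  set n : ℝ := (Fintype.card ι : ℝ)
  set t := √((Real.log K + Real.log (1 / δ)) / (2 * n))
  have hK : 0 < K := by positivity
  have hn : 0 < n := by positivity
  have ht : 2 * n * t ^ 2 = Real.log K + Real.log (1 / δ) := by
    have : 0 ≤ Real.log K + Real.log (1 / δ) :=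
      add_nonneg (Real.log_nonneg (by simp [K, Nat.one_le_iff_ne_zero]))
        (Real.log_nonneg (by rw [le_div_iff₀ hδ0]; linarith))
    rw [Real.sq_sqrt (by positivity)]
    field_simp
  set S := {ω | ∀ θ, p θ ≤ 1 / n * ∑ i, Y θ i ω + t}
  have hbad : μ.real Sᶜ ≤ δ := calc
    μ.real Sᶜ ≤ μ.real (⋃ θ, {ω | 1 / n * ∑ i, Y θ i ω + t ≤ p θ}) := by
      refine measureReal_mono fun ω hω ↦ ?_
      simp only [S, Set.mem_compl_iff, Set.mem_ofPred_eq, not_forall, not_le,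
        Set.mem_iUnion] at hω ⊢
      obtain ⟨θ, hθ⟩ := hω
      exact ⟨θ, hθ.le⟩
    _ ≤ ∑ θ, μ.real {ω | 1 / n * ∑ i, Y θ i ω + t ≤ p θ} := measureReal_iUnion_fintype_le _
    _ ≤ ∑ _θ : Θ, Real.exp (-2 * n * t ^ 2) := Finset.sum_le_sum fun θ _ ↦
      measureReal_mean_add_le_le_exp (hind θ) (hmeas θ) (hY θ) (hmean θ) (Real.sqrt_nonneg _)
    _ = δ := by
      rw [Finset.sum_const, Finset.card_univ, nsmul_eq_mul, ← hK_def, neg_mul, neg_mul, ht,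
        Real.exp_neg, Real.exp_add, Real.exp_log hK, Real.exp_log (by positivity)]
      field_simp
  calc ENNReal.ofReal (1 - δ) = 1 - ENNReal.ofReal δ := by
        rw [ENNReal.ofReal_sub _ hδ0.le, ENNReal.ofReal_one]
    _ ≤ μ S := by
      rw [tsub_le_iff_right, ← measure_univ (μ := μ)]
      refine (measure_univ_le_add_compl S).trans (add_le_add_right ?_ _)
      rw [← ofReal_measureReal (measure_ne_top μ _)]
      exact ENNReal.ofReal_le_ofReal hbad

end Hoeffding

theorem equitable_learning_bound_general
    {Ω Θ 𝒞 𝒟 : Type*} [MeasurableSpace Ω] (μ : Measure Ω) [IsProbabilityMeasure μ]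
    [Fintype Θ] [Nonempty Θ] [Fintype 𝒞] [Fintype 𝒟]
    [MeasurableSpace 𝒞] [MeasurableSingletonClass 𝒞]
    [MeasurableSpace 𝒟] [MeasurableSingletonClass 𝒟]
    (m : ℕ) (hm : 0 < m) (δ : ℝ) (hδ0 : 0 < δ) (hδ1 : δ < 1)
    -- goal joint density over context-dialogue pairs
    (g : 𝒞 → 𝒟 → ℝ) (hg0 : ∀ c d, 0 ≤ g c d)
    -- human joint density over context-dialogue pairs
    (q : 𝒞 → 𝒟 → ℝ) (hq0 : ∀ c d, 0 ≤ q c d)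
    -- shared attribute kernel
    (Ak : 𝒞 → Bool → ℝ) (hAk0 : ∀ c a, 0 ≤ Ak c a)
    -- learned dialogue kernel (the learned dialogue distribution P_θ(·))
    (P : Θ → 𝒞 → 𝒟 → ℝ) (hP0 : ∀ θ c d, 0 ≤ P θ c d)
    -- test function
    (h : 𝒟 → Bool → ℝ) (h01 : ∀ d a, h d a ∈ Set.Icc (0 : ℝ) 1)
    -- (i) context-awareness
    (haware : ∀ c d, g c d / (∑ d', g c d') = q c d / (∑ d', q c d'))
    -- (ii) context-preservation
    (hpres : ∀ c a,
      ((∑ d', g c d') * Ak c a) / (∑ c', (∑ d', g c' d') * Ak c' a)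
        = ((∑ d', q c d') * Ak c a) / (∑ c', (∑ d', q c' d') * Ak c' a))
    -- (iii) balance of the goal
    (hbal : ∀ a, ∑ c, (∑ d', g c d') * Ak c a = 1 / 2)
    -- i.i.d. human sample with attached attributes and predictions:
    -- `X θ i = (C̃ᵢ, D̃ᵢ, D̂′ᵢ, Ãᵢ)` where `D̂′ᵢ ∼ P θ (C̃ᵢ)`
    (X : Θ → Fin m → Ω → 𝒞 × 𝒟 × 𝒟 × Bool)
    (hXmeas : ∀ θ i, Measurable (X θ i))
    (hlaw : ∀ θ i c d dh a,
      μ {ω | X θ i ω = (c, d, dh, a)} = ENNReal.ofReal (q c d * P θ c dh * Ak c a))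
    (hiid : ∀ θ, iIndepFun (X θ) μ) :
    ENNReal.ofReal (1 - δ) ≤
      μ {ω | ∀ θ : Θ,
        2 * min (∑ c, (∑ d, q c d) * Ak c false) (∑ c, (∑ d, q c d) * Ak c true)
          * (∑ c, ∑ d, ∑ dh, ∑ a, g c d * P θ c dh * Ak c a * |h d a - h dh a|)
        ≤ (1 / (m : ℝ)) * ∑ i,
            |h (X θ i ω).2.1 (X θ i ω).2.2.2 - h (X θ i ω).2.2.1 (X θ i ω).2.2.2|
          + Real.sqrt ((Real.log (Fintype.card Θ) + Real.log (2 / δ)) / (2 * m))} := by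
  have : Nonempty (Fin m) := Fin.pos_iff_nonempty.mp hm
  set f : 𝒞 × 𝒟 × 𝒟 × Bool → ℝ := fun x ↦ |h x.2.1 x.2.2.2 - h x.2.2.1 x.2.2.2|
  have hf : ∀ x, f x ∈ Set.Icc 0 1 := fun x ↦ ⟨abs_nonneg _,
    abs_sub_le_of_nonneg_of_le (h01 _ _).1 (h01 _ _).2 (h01 _ _).1 (h01 _ _).2⟩
  have hmean : ∀ θ i, μ[fun ω ↦ f (X θ i ω)]
      = ∑ c, ∑ d, ∑ dh, ∑ a, q c d * P θ c dh * Ak c a * |h d a - h dh a| := by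
    intro θ i
    have hw : ∀ c d dh a, 0 ≤ q c d * P θ c dh * Ak c a := fun c d dh a ↦
      mul_nonneg (mul_nonneg (hq0 c d) (hP0 θ c dh)) (hAk0 c a)
    rw [integral_comp_eq_sum_measureReal (hXmeas θ i)]
    simp only [Fintype.sum_prod_type, measureReal_def, hlaw, ENNReal.toReal_ofReal, hw, f]
  have hchange : ∀ θ,
      2 * min (∑ c, (∑ d, q c d) * Ak c false) (∑ c, (∑ d, q c d) * Ak c true)
          * (∑ c, ∑ d, ∑ dh, ∑ a, g c d * P θ c dh * Ak c a * |h d a - h dh a|)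
        ≤ ∑ c, ∑ d, ∑ dh, ∑ a, q c d * P θ c dh * Ak c a * |h d a - h dh a| :=
    fun θ ↦ two_mul_goal_expectation_le_human_expectation hg0 hq0 hAk0 haware hpres hbal
      (Bool.forall_bool.2 ⟨min_le_left _ _, min_le_right _ _⟩) (hP0 θ) fun _ _ _ ↦ abs_nonneg _
  calc ENNReal.ofReal (1 - δ) ≤ ENNReal.ofReal (1 - δ / 2) := by gcongr; linarith
    _ ≤ _ := ofReal_one_sub_le_measure_forall_le_mean_add_sqrt (by positivity) (by linarith)
        (fun θ ↦ (hiid θ).comp (fun _ ↦ f) fun _ ↦ measurable_of_countable f)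
        (fun θ i ↦ (measurable_of_countable f).comp (hXmeas θ i)) (fun _ _ _ ↦ hf _) hmean
    _ ≤ _ := measure_mono fun ω hω ↦ by
        simp only [Set.mem_ofPred_eq, Fintype.card_fin, one_div_div, Function.comp_apply] at hω ⊢
        exact fun θ ↦ (hchange θ).trans (hω θ)

/-- Theorem 2 of the paper (full learning bound). The equitable goal distribution is given
by a joint density `g` on contexts/dialogues together with the attribute kernel `Ak`; the
human distribution has joint density `q` with the same attribute kernel; predictions are
drawn from the learned kernel `P θ` applied to the context. Under context-awareness,
context-preservation, balance of the goal, `β := min_a Pr(Ã=a) > 0`, and an i.i.d. sample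
of size `m` from the human distribution (with predictions attached), with probability at
least `1 - δ`, for all `θ ∈ Θ`:
`2β·E[|h(D,A) - h(D̂,A)|] ≤ (1/m) Σᵢ |h(D̃ᵢ,Ãᵢ) - h(D̂′ᵢ,Ãᵢ)| + sqrt((log|Θ| + log(2/δ))/(2m))`. -/
theorem equitable_learning_bound
    {Ω Θ 𝒞 𝒟 : Type*} [MeasurableSpace Ω] (μ : Measure Ω) [IsProbabilityMeasure μ]
    [Fintype Θ] [Nonempty Θ] [Fintype 𝒞] [Fintype 𝒟]
    [MeasurableSpace 𝒞] [MeasurableSingletonClass 𝒞]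
    [MeasurableSpace 𝒟] [MeasurableSingletonClass 𝒟]
    (m : ℕ) (hm : 0 < m) (δ : ℝ) (hδ0 : 0 < δ) (hδ1 : δ < 1)
    -- goal joint density over context-dialogue pairs
    (g : 𝒞 → 𝒟 → ℝ) (hg0 : ∀ c d, 0 ≤ g c d) (hg1 : ∑ c, ∑ d, g c d = 1)
    -- human joint density over context-dialogue pairs
    (q : 𝒞 → 𝒟 → ℝ) (hq0 : ∀ c d, 0 ≤ q c d) (hq1 : ∑ c, ∑ d, q c d = 1)
    -- shared attribute kernel
    (Ak : 𝒞 → Bool → ℝ) (hAk0 : ∀ c a, 0 ≤ Ak c a) (hAk1 : ∀ c, Ak c false + Ak c true = 1)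
    -- learned dialogue kernel (the learned dialogue distribution P_θ(·))
    (P : Θ → 𝒞 → 𝒟 → ℝ) (hP0 : ∀ θ c d, 0 ≤ P θ c d) (hP1 : ∀ θ c, ∑ d, P θ c d = 1)
    -- test function
    (h : 𝒟 → Bool → ℝ) (h01 : ∀ d a, h d a ∈ Set.Icc (0 : ℝ) 1)
    -- (i) context-awareness
    (haware : ∀ c d, g c d / (∑ d', g c d') = q c d / (∑ d', q c d'))
    -- (ii) context-preservation
    (hpres : ∀ c a,
      ((∑ d', g c d') * Ak c a) / (∑ c', (∑ d', g c' d') * Ak c' a)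
        = ((∑ d', q c d') * Ak c a) / (∑ c', (∑ d', q c' d') * Ak c' a))
    -- (iii) balance of the goal
    (hbal : ∀ a, ∑ c, (∑ d', g c d') * Ak c a = 1 / 2)
    -- (iv) positivity of β := min_a Pr(Ã=a)
    (hβ : 0 < min (∑ c, (∑ d, q c d) * Ak c false) (∑ c, (∑ d, q c d) * Ak c true))
    -- i.i.d. human sample with attached attributes and predictions:
    -- `X θ i = (C̃ᵢ, D̃ᵢ, D̂′ᵢ, Ãᵢ)` where `D̂′ᵢ ∼ P θ (C̃ᵢ)`
    (X : Θ → Fin m → Ω → 𝒞 × 𝒟 × 𝒟 × Bool)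
    (hXmeas : ∀ θ i, Measurable (X θ i))
    (hlaw : ∀ θ i c d dh a,
      μ {ω | X θ i ω = (c, d, dh, a)} = ENNReal.ofReal (q c d * P θ c dh * Ak c a))
    (hiid : ∀ θ, iIndepFun (X θ) μ) :
    ENNReal.ofReal (1 - δ) ≤
      μ {ω | ∀ θ : Θ,
        2 * min (∑ c, (∑ d, q c d) * Ak c false) (∑ c, (∑ d, q c d) * Ak c true)
          * (∑ c, ∑ d, ∑ dh, ∑ a, g c d * P θ c dh * Ak c a * |h d a - h dh a|)
        ≤ (1 / (m : ℝ)) * ∑ i,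
            |h (X θ i ω).2.1 (X θ i ω).2.2.2 - h (X θ i ω).2.2.1 (X θ i ω).2.2.2|
          + Real.sqrt ((Real.log (Fintype.card Θ) + Real.log (2 / δ)) / (2 * m))} :=
  equitable_learning_bound_general μ m hm δ hδ0 hδ1 g hg0 q hq0 Ak hAk0 P hP0 h h01 haware hpres
    hbal X hXmeas hlaw hiid
end

section
/- Let β ∈ (0, 1/2] and suppose TD_H(θ) ≤ ε·β for the human-distribution test divergence. Under the hypotheses of the population change-of-measure bound (context-awareness, context-preservation, balance, pairwise conditional independence), the parity gap of the learned dialogue distribution on the equitable goal satisfies Δ(Ĝ_θ) ≤ 2·TD_G(θ) ≤ ε. -/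
/-- Composition of Theorems 1 and 2 of the paper: with equitable balanced goal density
`g` (attribute kernel `Ak`, scoring function `s`), human density `q` that is
context-aware and context-preserving, learned dialogue kernel `Pk`, and
`β := min_a Pr(Ã=a) ∈ (0, 1/2]`, if the human-distribution test divergence satisfies
`TD_H ≤ ε·β`, then the parity gap of the learned dialogue distribution satisfies
`Δ(Ĝ_θ) ≤ 2·TD_G ≤ ε`. -/
theorem parity_gap_le_of_human_testDivergence
    {𝒞 𝒟 : Type*} [Fintype 𝒞] [Fintype 𝒟] (ε : ℝ)
    (g q : 𝒞 → 𝒟 → ℝ) (Ak : 𝒞 → Bool → ℝ) (Pk : 𝒞 → 𝒟 → ℝ) (s : 𝒟 → Bool → ℝ)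
    (hg0 : ∀ c d, 0 ≤ g c d) (hg1 : ∑ c, ∑ d, g c d = 1)
    (hq0 : ∀ c d, 0 ≤ q c d) (hq1 : ∑ c, ∑ d, q c d = 1)
    (hAk0 : ∀ c a, 0 ≤ Ak c a) (hAk1 : ∀ c, Ak c false + Ak c true = 1)
    (hPk0 : ∀ c d, 0 ≤ Pk c d) (hPk1 : ∀ c, ∑ d, Pk c d = 1)
    (hs01 : ∀ d a, s d a ∈ Set.Icc (0 : ℝ) 1)
    -- context-awareness
    (haware : ∀ c d, g c d / (∑ d', g c d') = q c d / (∑ d', q c d'))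
    -- context-preservation
    (hpres : ∀ c a,
      ((∑ d', g c d') * Ak c a) / (∑ c', (∑ d', g c' d') * Ak c' a)
        = ((∑ d', q c d') * Ak c a) / (∑ c', (∑ d', q c' d') * Ak c' a))
    -- balance of the goal
    (hbal : ∀ a, ∑ c, (∑ d', g c d') * Ak c a = 1 / 2)
    -- score parity of the goal (the goal is equitable)
    (hparity :
      (∑ c, ∑ d, g c d * Ak c false * s d false) / (∑ c, (∑ d', g c d') * Ak c false)
        = (∑ c, ∑ d, g c d * Ak c true * s d true) / (∑ c, (∑ d', g c d') * Ak c true))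
    -- β ∈ (0, 1/2]
    (hβpos : 0 < min (∑ c, (∑ d, q c d) * Ak c false) (∑ c, (∑ d, q c d) * Ak c true))
    (hβhalf : min (∑ c, (∑ d, q c d) * Ak c false) (∑ c, (∑ d, q c d) * Ak c true) ≤ 1 / 2)
    -- small test divergence on the human distribution: TD_H ≤ ε·β
    (hTDH : ∑ c, ∑ d, ∑ dh, ∑ a, q c d * Pk c dh * Ak c a * |s d a - s dh a|
      ≤ ε * min (∑ c, (∑ d, q c d) * Ak c false) (∑ c, (∑ d, q c d) * Ak c true)) :
    -- parity gap of learned distribution ≤ 2·TD_G ≤ ε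
    |(∑ c, ∑ dh, (∑ d', g c d') * Ak c false * Pk c dh * s dh false)
        / (∑ c, (∑ d', g c d') * Ak c false)
      - (∑ c, ∑ dh, (∑ d', g c d') * Ak c true * Pk c dh * s dh true)
        / (∑ c, (∑ d', g c d') * Ak c true)|
      ≤ 2 * (∑ c, ∑ d, ∑ dh, ∑ a, g c d * Pk c dh * Ak c a * |s d a - s dh a|)
    ∧ 2 * (∑ c, ∑ d, ∑ dh, ∑ a, g c d * Pk c dh * Ak c a * |s d a - s dh a|) ≤ ε := by
  classical
  set β := min (∑ c, (∑ d, q c d) * Ak c false) (∑ c, (∑ d, q c d) * Ak c true) with hβdef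
  -- Notation for key quantities (as plain `have`-free abbreviations via local defs)
  -- pointwise change-of-measure bound
  have hβpos' : (0:ℝ) < β := hβpos
  have hpt : ∀ c d (a : Bool), g c d * Ak c a ≤ (1/(2*β)) * (q c d * Ak c a) := by
    intro c d a
    have hZqge : β ≤ ∑ c', (∑ d', q c' d') * Ak c' a := by
      cases a
      · exact min_le_left _ _
      · exact min_le_right _ _
    have hZqpos : (0:ℝ) < ∑ c', (∑ d', q c' d') * Ak c' a := lt_of_lt_of_le hβpos' hZqge
    have hgc : (0:ℝ) ≤ ∑ d', g c d' := Finset.sum_nonneg fun _ _ => hg0 c _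
    rcases eq_or_lt_of_le hgc with h0 | hgcpos
    · have hgd : g c d = 0 :=
        (Finset.sum_eq_zero_iff_of_nonneg (fun d' _ => hg0 c d')).mp h0.symm d (Finset.mem_univ d)
      rw [hgd]
      have h2b : (0:ℝ) < 2*β := by linarith
      have : (0:ℝ) ≤ (1/(2*β)) * (q c d * Ak c a) :=
        mul_nonneg (le_of_lt (one_div_pos.mpr h2b)) (mul_nonneg (hq0 c d) (hAk0 c a))
      simpa using this
    · have hkey := hpres c a
      rw [hbal a] at hkey
      have hgA : (∑ d', g c d') * Ak c a
          = ((∑ d', q c d') * Ak c a) / (∑ c', (∑ d', q c' d') * Ak c' a) / 2 := by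
        rw [← hkey]; ring
      have hqc : (0:ℝ) ≤ ∑ d', q c d' := Finset.sum_nonneg fun _ _ => hq0 c _
      rcases eq_or_lt_of_le hqc with hq0' | hqcpos
      · have hgA0 : (∑ d', g c d') * Ak c a = 0 := by
          rw [hgA, ← hq0']; simp
        have hA0 : Ak c a = 0 := by
          rcases mul_eq_zero.mp hgA0 with h | h
          · exact absurd h (ne_of_gt hgcpos)
          · exact h
        rw [hA0]
        simp
      · -- both marginals positive
        have haw := haware c d
        have hgd : g c d * (∑ d', q c d') = q c d * (∑ d', g c d') := by
          have := (div_eq_div_iff (ne_of_gt hgcpos) (ne_of_gt hqcpos)).mp haw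
          linarith
        have hgdA : g c d * Ak c a
            = q c d * Ak c a / (2 * (∑ c', (∑ d', q c' d') * Ak c' a)) := by
          have hmul : g c d * Ak c a * (∑ d', q c d')
              = q c d * Ak c a / (2 * (∑ c', (∑ d', q c' d') * Ak c' a)) * (∑ d', q c d') := by
            have e1 : g c d * Ak c a * (∑ d', q c d')
                = q c d * ((∑ d', g c d') * Ak c a) := by
              calc g c d * Ak c a * (∑ d', q c d')
                  = (g c d * (∑ d', q c d')) * Ak c a := by ring
                _ = (q c d * (∑ d', g c d')) * Ak c a := by rw [hgd]
                _ = q c d * ((∑ d', g c d') * Ak c a) := by ring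
            rw [e1, hgA]
            field_simp
          exact mul_right_cancel₀ (ne_of_gt hqcpos) hmul
        rw [hgdA]
        have hqA : (0:ℝ) ≤ q c d * Ak c a := mul_nonneg (hq0 c d) (hAk0 c a)
        have e2 : (1/(2*β)) * (q c d * Ak c a) = q c d * Ak c a / (2*β) := by ring
        rw [e2, div_le_div_iff₀ (by positivity) (by positivity)]
        nlinarith [mul_nonneg hqA (sub_nonneg.mpr hZqge)]
  -- four-fold pointwise bound
  have hpt4 : ∀ c d dh (a : Bool),
      g c d * Pk c dh * Ak c a * |s d a - s dh a|
        ≤ (1/(2*β)) * (q c d * Pk c dh * Ak c a * |s d a - s dh a|) := by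
    intro c d dh a
    have h1 : (0:ℝ) ≤ Pk c dh * |s d a - s dh a| := mul_nonneg (hPk0 c dh) (abs_nonneg _)
    calc g c d * Pk c dh * Ak c a * |s d a - s dh a|
        = (g c d * Ak c a) * (Pk c dh * |s d a - s dh a|) := by ring
      _ ≤ ((1/(2*β)) * (q c d * Ak c a)) * (Pk c dh * |s d a - s dh a|) :=
          mul_le_mul_of_nonneg_right (hpt c d a) h1
      _ = (1/(2*β)) * (q c d * Pk c dh * Ak c a * |s d a - s dh a|) := by ring
  -- TD_G ≤ (1/(2β)) TD_H
  have hTDG : (∑ c, ∑ d, ∑ dh, ∑ a, g c d * Pk c dh * Ak c a * |s d a - s dh a|)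
      ≤ (1/(2*β)) * ∑ c, ∑ d, ∑ dh, ∑ a, q c d * Pk c dh * Ak c a * |s d a - s dh a| := by
    rw [Finset.mul_sum]
    refine Finset.sum_le_sum fun c _ => ?_
    rw [Finset.mul_sum]
    refine Finset.sum_le_sum fun d _ => ?_
    rw [Finset.mul_sum]
    refine Finset.sum_le_sum fun dh _ => ?_
    rw [Finset.mul_sum]
    exact Finset.sum_le_sum fun a _ => hpt4 c d dh a
  have part2 : 2 * (∑ c, ∑ d, ∑ dh, ∑ a, g c d * Pk c dh * Ak c a * |s d a - s dh a|) ≤ ε := by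
    have h1 : (1/(2*β)) * (∑ c, ∑ d, ∑ dh, ∑ a, q c d * Pk c dh * Ak c a * |s d a - s dh a|)
        ≤ (1/(2*β)) * (ε * β) :=
      mul_le_mul_of_nonneg_left hTDH
        (le_of_lt (one_div_pos.mpr (by linarith : (0:ℝ) < 2*β)))
    have hβne : β ≠ 0 := ne_of_gt hβpos'
    have h2 : (1/(2*β)) * (ε * β) = ε / 2 := by
      field_simp
    linarith
  -- Part 1: parity gap ≤ 2 TD_G
  -- difference identity per attribute
  have hdiff : ∀ a : Bool,
      (∑ c, ∑ dh, (∑ d', g c d') * Ak c a * Pk c dh * s dh a)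
        - (∑ c, ∑ d, g c d * Ak c a * s d a)
      = ∑ c, ∑ d, ∑ dh, g c d * Pk c dh * Ak c a * (s dh a - s d a) := by
    intro a
    rw [← Finset.sum_sub_distrib]
    refine Finset.sum_congr rfl fun c _ => ?_
    have h1 : (∑ dh, (∑ d', g c d') * Ak c a * Pk c dh * s dh a)
        = ∑ d, ∑ dh, g c d * Pk c dh * Ak c a * s dh a := by
      rw [Finset.sum_comm]
      refine Finset.sum_congr rfl fun dh _ => ?_
      rw [Finset.sum_mul, Finset.sum_mul, Finset.sum_mul]
      exact Finset.sum_congr rfl fun d _ => by ring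
    have h2 : (∑ d, g c d * Ak c a * s d a)
        = ∑ d, ∑ dh, g c d * Pk c dh * Ak c a * s d a := by
      refine Finset.sum_congr rfl fun d _ => ?_
      have : (∑ dh, g c d * Pk c dh * Ak c a * s d a)
          = (g c d * Ak c a * s d a) * ∑ dh, Pk c dh := by
        rw [Finset.mul_sum]
        exact Finset.sum_congr rfl fun dh _ => by ring
      rw [this, hPk1 c, mul_one]
    rw [h1, h2, ← Finset.sum_sub_distrib]
    refine Finset.sum_congr rfl fun d _ => ?_
    rw [← Finset.sum_sub_distrib]
    exact Finset.sum_congr rfl fun dh _ => by ring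
  -- abs bound per attribute
  have habs : ∀ a : Bool,
      |(∑ c, ∑ dh, (∑ d', g c d') * Ak c a * Pk c dh * s dh a)
        - (∑ c, ∑ d, g c d * Ak c a * s d a)|
      ≤ ∑ c, ∑ d, ∑ dh, g c d * Pk c dh * Ak c a * |s d a - s dh a| := by
    intro a
    rw [hdiff a]
    calc |∑ c, ∑ d, ∑ dh, g c d * Pk c dh * Ak c a * (s dh a - s d a)|
        ≤ ∑ c, |∑ d, ∑ dh, g c d * Pk c dh * Ak c a * (s dh a - s d a)| :=
          Finset.abs_sum_le_sum_abs _ _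
      _ ≤ ∑ c, ∑ d, ∑ dh, g c d * Pk c dh * Ak c a * |s d a - s dh a| := by
          refine Finset.sum_le_sum fun c _ => ?_
          calc |∑ d, ∑ dh, g c d * Pk c dh * Ak c a * (s dh a - s d a)|
              ≤ ∑ d, |∑ dh, g c d * Pk c dh * Ak c a * (s dh a - s d a)| :=
                Finset.abs_sum_le_sum_abs _ _
            _ ≤ ∑ d, ∑ dh, g c d * Pk c dh * Ak c a * |s d a - s dh a| := by
                refine Finset.sum_le_sum fun d _ => ?_
                calc |∑ dh, g c d * Pk c dh * Ak c a * (s dh a - s d a)|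
                    ≤ ∑ dh, |g c d * Pk c dh * Ak c a * (s dh a - s d a)| :=
                      Finset.abs_sum_le_sum_abs _ _
                  _ = ∑ dh, g c d * Pk c dh * Ak c a * |s d a - s dh a| := by
                      refine Finset.sum_congr rfl fun dh _ => ?_
                      rw [abs_mul, abs_sub_comm]
                      congr 1
                      exact abs_of_nonneg
                        (mul_nonneg (mul_nonneg (hg0 c d) (hPk0 c dh)) (hAk0 c a))
  -- TD_G decomposes over the two attributes
  have hsplit : (∑ c, ∑ d, ∑ dh, ∑ a, g c d * Pk c dh * Ak c a * |s d a - s dh a|)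
      = (∑ c, ∑ d, ∑ dh, g c d * Pk c dh * Ak c false * |s d false - s dh false|)
        + (∑ c, ∑ d, ∑ dh, g c d * Pk c dh * Ak c true * |s d true - s dh true|) := by
    rw [← Finset.sum_add_distrib]
    refine Finset.sum_congr rfl fun c _ => ?_
    rw [← Finset.sum_add_distrib]
    refine Finset.sum_congr rfl fun d _ => ?_
    rw [← Finset.sum_add_distrib]
    refine Finset.sum_congr rfl fun dh _ => ?_
    rw [Fintype.sum_bool]
    ring
  -- score parity: Sf = St
  rw [hbal false, hbal true] at hparity ⊢
  have hSfSt : (∑ c, ∑ d, g c d * Ak c false * s d false)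
      = (∑ c, ∑ d, g c d * Ak c true * s d true) := by
    have h := hparity
    rw [div_eq_div_iff (by norm_num) (by norm_num)] at h
    linarith
  constructor
  · have hf := habs false
    have ht := habs true
    have heq : (∑ c, ∑ dh, (∑ d', g c d') * Ak c false * Pk c dh * s dh false) / (1/2)
        - (∑ c, ∑ dh, (∑ d', g c d') * Ak c true * Pk c dh * s dh true) / (1/2)
      = 2 * (((∑ c, ∑ dh, (∑ d', g c d') * Ak c false * Pk c dh * s dh false)
              - (∑ c, ∑ d, g c d * Ak c false * s d false))
          - ((∑ c, ∑ dh, (∑ d', g c d') * Ak c true * Pk c dh * s dh true)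
              - (∑ c, ∑ d, g c d * Ak c true * s d true))) := by
      rw [hSfSt]; ring
    rw [heq, hsplit, abs_mul, abs_two]
    have htri : |(((∑ c, ∑ dh, (∑ d', g c d') * Ak c false * Pk c dh * s dh false)
              - (∑ c, ∑ d, g c d * Ak c false * s d false))
          - ((∑ c, ∑ dh, (∑ d', g c d') * Ak c true * Pk c dh * s dh true)
              - (∑ c, ∑ d, g c d * Ak c true * s d true)))|
        ≤ |((∑ c, ∑ dh, (∑ d', g c d') * Ak c false * Pk c dh * s dh false)
              - (∑ c, ∑ d, g c d * Ak c false * s d false))|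
          + |((∑ c, ∑ dh, (∑ d', g c d') * Ak c true * Pk c dh * s dh true)
              - (∑ c, ∑ d, g c d * Ak c true * s d true))| := by
      rw [sub_eq_add_neg]
      refine le_trans (abs_add_le _ _) ?_
      rw [abs_neg]
    linarith
  · exact part2
end
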